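/- Let H, K be complex Hilbert spaces each equipped with the triple product {x,y,z} := (⟪y,x⟫ z + ⟪y,z⟫ x)/2, and let Δ : H → K be a bijection such that for all a, b ∈ H: {a, b, a} = 0 if and only if {Δa, Δb, Δa} = 0. Then Δ(0) = 0, and for all a, b ∈ H, ⟪a, b⟫ = 0 if and only if ⟪Δa, Δb⟫ = 0. -/

import Mathlib

noncomputable def hilbertTriple {H : Type*} [NormedAddCommGroup H] [InnerProductSpace ℂ H]
    (x y z : H) : H :=
  ((2:ℂ)⁻¹) • ((inner ℂ y x : ℂ) • z + (inner ℂ y z : ℂ) • x)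

lemma hilbertTriple_self {H : Type*} [NormedAddCommGroup H] [InnerProductSpace ℂ H]
    (x y : H) : hilbertTriple x y x = (inner ℂ y x : ℂ) • x := by
  unfold hilbertTriple
  module

theorem stmt_14 {H K : Type*} [NormedAddCommGroup H] [InnerProductSpace ℂ H]
    [NormedAddCommGroup K] [InnerProductSpace ℂ K]
    (Δ : H → K) (hbij : Function.Bijective Δ)
    (h : ∀ a b : H, hilbertTriple a b a = 0 ↔ hilbertTriple (Δ a) (Δ b) (Δ a) = 0) :
    Δ 0 = 0 ∧ ∀ a b : H, ((inner ℂ a b : ℂ) = 0 ↔ (inner ℂ (Δ a) (Δ b) : ℂ) = 0) := by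
  have h' : ∀ a b : H, ((inner ℂ b a : ℂ) • a = 0 ↔ (inner ℂ (Δ b) (Δ a) : ℂ) • Δ a = 0) := by
    intro a b
    have := h a b
    rwa [hilbertTriple_self, hilbertTriple_self] at this
  have hΔ0 : Δ 0 = 0 := by
    have := (h' 0 0).mp (by simp)
    rcases smul_eq_zero.mp this with h1 | h2
    · exact inner_self_eq_zero.mp h1
    · exact h2
  refine ⟨hΔ0, fun a b => ?_⟩
  by_cases ha : a = 0
  · subst ha
    simp [hΔ0]
  · have hΔa : Δ a ≠ 0 := fun hz => ha (hbij.1 (by rw [hz, hΔ0]))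
    rw [inner_eq_zero_symm, inner_eq_zero_symm (x := Δ a)]
    constructor
    · intro hba
      have := (h' a b).mp (by rw [hba, zero_smul])
      rcases smul_eq_zero.mp this with h1 | h2
      · exact h1
      · exact absurd h2 hΔa
    · intro hba
      have := (h' a b).mpr (by rw [hba, zero_smul])
      rcases smul_eq_zero.mp this with h1 | h2
      · exact h1
      · exact absurd h2 ha
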